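/- Operator-norm perturbation of the n-qubit μ-biased QFT: for c ∈ (0,1] and μ, μ̃ ∈ [-1+c,1-c]ⁿ with ‖μ − μ̃‖_∞ ≤ ε, we have ‖H_μ^{⊗n} − H_{μ̃}^{⊗n}‖ ≤ 2ntε in operator norm, with t = ((2−c)(1/√(8c) + 1/(2c)) + 1)/c². -/

import Mathlib

open Finset

/-- Embed a Boolean bit as an element of `{-1, 1} ⊆ ℝ` (`true ↦ 1`, `false ↦ -1`). -/
def bval (b : Bool) : ℝ := if b then 1 else -1

/-- The product distribution `D_μ` on `{-1,1}ⁿ`: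
`D_μ(x) = ∏_{i : x_i = 1} (1+μ_i)/2 · ∏_{i : x_i = -1} (1-μ_i)/2`. -/
noncomputable def Dmu {n : ℕ} (μ : Fin n → ℝ) (x : Fin n → Bool) : ℝ :=
  ∏ i, (1 + μ i * bval (x i)) / 2

/-- The μ-biased basis function `φ_{μ,a}(x) = ∏_{i : a_i = 1} (x_i - μ_i)/√(1-μ_i²)`. -/
noncomputable def phimu {n : ℕ} (μ : Fin n → ℝ) (a : Fin n → Bool) (x : Fin n → Bool) : ℝ :=
  ∏ i, if a i then (bval (x i) - μ i) / Real.sqrt (1 - μ i ^ 2) else 1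

/-- The μ-biased Fourier coefficient `f̂_μ(a) = E_{x∼D_μ}[f(x) φ_{μ,a}(x)]`. -/
noncomputable def fhat {n : ℕ} (μ : Fin n → ℝ) (f : (Fin n → Bool) → ℝ)
    (a : Fin n → Bool) : ℝ :=
  ∑ x : Fin n → Bool, Dmu μ x * f x * phimu μ a x

/-- Single-bit distribution: `D_μ(1) = (1+μ)/2`, `D_μ(-1) = (1-μ)/2`. -/
noncomputable def D1 (μ : ℝ) (b : Bool) : ℝ := (1 + μ * bval b) / 2

/-- Single-bit μ-biased basis: `φ_{μ,0}(b) = 1`, `φ_{μ,1}(b) = (b-μ)/√(1-μ²)`. -/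
noncomputable def phi1 (μ : ℝ) (v : Bool) (b : Bool) : ℝ :=
  if v then (bval b - μ) / Real.sqrt (1 - μ ^ 2) else 1

/-- The single-qubit μ-biased QFT, as a matrix: entry at `(v,b)` is `√(D_μ(b)) φ_{μ,v}(b)`. -/
noncomputable def H1 (μ : ℝ) : Matrix Bool Bool ℝ :=
  fun v b => Real.sqrt (D1 μ b) * phi1 μ v b

/-- The n-qubit μ-biased QFT, the tensor product `⊗ᵢ H_{μᵢ}` of single-qubit transforms,
as a matrix indexed by `{0,1}ⁿ × {-1,1}ⁿ`. -/
noncomputable def Hn {n : ℕ} (μ : Fin n → ℝ) :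
    Matrix (Fin n → Bool) (Fin n → Bool) ℝ :=
  fun a x => ∏ i, H1 (μ i) (a i) (x i)

/-!
Write `H_μ^{⊗n} - H_μ̃^{⊗n}` as a telescoping sum over hybrids which switch one qubit at a time.
The `i`-th term is a product of an orthogonal tensor product, which does not change the norm,
and `H_{μᵢ} - H_{μ̃ᵢ}` acting on qubit `i` alone. The latter matrix has two nonzero entries in
each row and column, each at most `tε` in absolute value (the entries of `H_μ` are
`±√((1 ± μ)/2)`, whose derivative is at most `1/√(8c)` on `[-1+c, 1-c]`), so the Schur test
bounds its norm by `2tε`.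
-/

open Matrix
open scoped Matrix.Norms.L2Operator

namespace Matrix

section SchurTest

variable {𝕜 m n : Type*} [RCLike 𝕜] [Fintype m] [Fintype n]

theorem sum_norm_mulVec_sq_le (A : Matrix m n 𝕜) {r s : ℝ} (hr : 0 ≤ r)
    (hrow : ∀ i, ∑ j, ‖A i j‖ ≤ r) (hcol : ∀ j, ∑ i, ‖A i j‖ ≤ s) (x : n → 𝕜) :
    ∑ i, ‖(A *ᵥ x) i‖ ^ 2 ≤ r * s * ∑ j, ‖x j‖ ^ 2 := by
  have hrow_sq : ∀ i, ‖(A *ᵥ x) i‖ ^ 2 ≤ r * ∑ j, ‖A i j‖ * ‖x j‖ ^ 2 := fun i => by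
    have hle : ‖(A *ᵥ x) i‖ ≤ ∑ j, ‖A i j‖ * ‖x j‖ :=
      (norm_sum_le _ _).trans_eq (by simp only [norm_mul])
    -- Cauchy–Schwarz with weights `‖A i j‖`
    calc ‖(A *ᵥ x) i‖ ^ 2 ≤ (∑ j, ‖A i j‖ * ‖x j‖) ^ 2 := by gcongr
      _ ≤ (∑ j, ‖A i j‖) * ∑ j, ‖A i j‖ * ‖x j‖ ^ 2 :=
        sum_sq_le_sum_mul_sum_of_sq_le_mul _ (fun _ _ => norm_nonneg _)
          (fun _ _ => by positivity) fun _ _ => le_of_eq (by ring)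
      _ ≤ r * ∑ j, ‖A i j‖ * ‖x j‖ ^ 2 := by gcongr; exact hrow i
  calc ∑ i, ‖(A *ᵥ x) i‖ ^ 2 ≤ ∑ i, r * ∑ j, ‖A i j‖ * ‖x j‖ ^ 2 :=
        sum_le_sum fun i _ => hrow_sq i
    _ = r * ∑ j, (∑ i, ‖A i j‖) * ‖x j‖ ^ 2 := by
      rw [← mul_sum, sum_comm]; simp only [sum_mul]
    _ ≤ r * ∑ j, s * ‖x j‖ ^ 2 := by gcongr with j; exact hcol j
    _ = r * s * ∑ j, ‖x j‖ ^ 2 := by rw [← mul_sum, mul_assoc]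

theorem l2_opNorm_le_of_sum_norm_le [DecidableEq n] (A : Matrix m n 𝕜) {r s : ℝ} (hr : 0 ≤ r)
    (hrow : ∀ i, ∑ j, ‖A i j‖ ≤ r) (hcol : ∀ j, ∑ i, ‖A i j‖ ≤ s) :
    ‖A‖ ≤ √(r * s) := by
  rw [l2_opNorm_def]
  refine ContinuousLinearMap.opNorm_le_bound _ (Real.sqrt_nonneg _) fun x => ?_
  rw [EuclideanSpace.norm_eq, EuclideanSpace.norm_eq, ← Real.sqrt_mul' _ (by positivity)]
  exact Real.sqrt_le_sqrt (sum_norm_mulVec_sq_le A hr hrow hcol x.ofLp)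

end SchurTest

section PiKronecker

variable {ι α β γ R : Type*} [Fintype ι]

def piKronecker [CommMonoid R] (A : ι → Matrix α β R) : Matrix (ι → α) (ι → β) R :=
  of fun a b => ∏ i, A i (a i) (b i)

@[simp]
theorem piKronecker_apply [CommMonoid R] (A : ι → Matrix α β R) (a : ι → α) (b : ι → β) :
    piKronecker A a b = ∏ i, A i (a i) (b i) := rfl

theorem piKronecker_one [CommSemiring R] [DecidableEq α] :
    piKronecker (1 : ι → Matrix α α R) = 1 := by
  ext a b
  simp [one_apply, prod_boole, funext_iff]

theorem conjTranspose_piKronecker [CommSemiring R] [StarRing R] (A : ι → Matrix α β R) :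
    (piKronecker A)ᴴ = piKronecker fun i => (A i)ᴴ := by
  ext a b
  simp [star_prod]

variable [DecidableEq ι]

theorem piKronecker_mul [CommSemiring R] [Fintype β] (A : ι → Matrix α β R)
    (B : ι → Matrix β γ R) : piKronecker A * piKronecker B = piKronecker fun i => A i * B i := by
  ext a c
  simp only [mul_apply, piKronecker_apply, prod_univ_sum, Fintype.piFinset_univ, prod_mul_distrib]

theorem piKronecker_mem_unitary [CommSemiring R] [StarRing R] [Fintype α] [DecidableEq α]
    {A : ι → Matrix α α R} (hA : ∀ i, A i ∈ unitary (Matrix α α R)) :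
    piKronecker A ∈ unitary (Matrix (ι → α) (ι → α) R) := by
  have h₁ : (fun i => (A i)ᴴ * A i) = 1 := funext fun i => (Unitary.mem_iff.1 (hA i)).1
  have h₂ : (fun i => A i * (A i)ᴴ) = 1 := funext fun i => (Unitary.mem_iff.1 (hA i)).2
  refine Unitary.mem_iff.2 ⟨?_, ?_⟩ <;>
    simp only [star_eq_conjTranspose, conjTranspose_piKronecker, piKronecker_mul, h₁, h₂,
      piKronecker_one]

theorem piKronecker_update_sub [CommRing R] (A : ι → Matrix α β R) (j : ι) (X Y : Matrix α β R) :
    piKronecker (Function.update A j X) - piKronecker (Function.update A j Y) =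
      piKronecker (Function.update A j (X - Y)) := by
  ext a b
  simp only [sub_apply, piKronecker_apply, Fintype.prod_eq_mul_prod_compl j, Function.update_self]
  have hrest : ∀ Z, ∏ i ∈ {j}ᶜ, Function.update A j Z i (a i) (b i) =
      ∏ i ∈ {j}ᶜ, A i (a i) (b i) :=
    fun Z => prod_congr rfl fun i hi => by rw [Function.update_of_ne (by simpa using hi)]
  rw [hrest, hrest, hrest, ← sub_mul]

theorem piKronecker_update_eq_mul_mulSingle [CommSemiring R] [Fintype α] [DecidableEq α]
    (A : ι → Matrix α α R) (j : ι) (X : Matrix α α R) :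
    piKronecker (Function.update A j X) =
      piKronecker (Function.update A j 1) * piKronecker (Pi.mulSingle j X) := by
  rw [piKronecker_mul]
  congr 1
  ext1 i
  rcases eq_or_ne i j with rfl | hij
  · simp
  · simp [hij]

end PiKronecker

section PiKroneckerNorm

variable {𝕜 ι α : Type*} [RCLike 𝕜] [Fintype ι] [DecidableEq ι]

theorem sum_norm_piKronecker_apply_left {β : Type*} [Fintype β] (A : ι → Matrix α β 𝕜)
    (a : ι → α) : ∑ b, ‖piKronecker A a b‖ = ∏ i, ∑ v, ‖A i (a i) v‖ := by
  simp only [piKronecker_apply, norm_prod, prod_univ_sum, Fintype.piFinset_univ]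

theorem sum_norm_piKronecker_apply_right {β : Type*} [Fintype α] (A : ι → Matrix α β 𝕜)
    (b : ι → β) : ∑ a, ‖piKronecker A a b‖ = ∏ i, ∑ u, ‖A i u (b i)‖ := by
  simp only [piKronecker_apply, norm_prod, prod_univ_sum, Fintype.piFinset_univ]

variable [Fintype α] [DecidableEq α]

theorem norm_piKronecker_mulSingle_le {D : Matrix α α 𝕜} {κ : ℝ} (hκ : 0 ≤ κ)
    (hD : ∀ u v, ‖D u v‖ ≤ κ) (j : ι) :
    ‖piKronecker (Pi.mulSingle j D)‖ ≤ Fintype.card α * κ := by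
  have hone : ∀ u, ∑ v, ‖(1 : Matrix α α 𝕜) u v‖ = 1 ∧ ∑ v, ‖(1 : Matrix α α 𝕜) v u‖ = 1 :=
    fun u => by simp [one_apply, apply_ite (‖·‖)]
  have h := l2_opNorm_le_of_sum_norm_le (piKronecker (Pi.mulSingle j D))
    (r := Fintype.card α * κ) (s := Fintype.card α * κ) (by positivity) (fun a => ?_) (fun b => ?_)
  · rwa [Real.sqrt_mul_self (by positivity)] at h
  · rw [sum_norm_piKronecker_apply_left,
      Fintype.prod_eq_single j fun i hi => by rw [Pi.mulSingle_eq_of_ne hi, (hone _).1],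
      Pi.mulSingle_eq_same]
    exact (sum_le_sum fun v _ => hD _ v).trans (by simp)
  · rw [sum_norm_piKronecker_apply_right,
      Fintype.prod_eq_single j fun i hi => by rw [Pi.mulSingle_eq_of_ne hi, (hone _).2],
      Pi.mulSingle_eq_same]
    exact (sum_le_sum fun u _ => hD u _).trans (by simp)

theorem norm_piKronecker_sub_le {A B : ι → Matrix α α 𝕜}
    (hA : ∀ i, A i ∈ unitary (Matrix α α 𝕜)) (hB : ∀ i, B i ∈ unitary (Matrix α α 𝕜)) :
    ‖piKronecker A - piKronecker B‖ ≤ ∑ i, ‖piKronecker (Pi.mulSingle i (A i - B i))‖ := by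
  suffices h : ∀ s : Finset ι, ‖piKronecker (s.piecewise A B) - piKronecker B‖ ≤
      ∑ i ∈ s, ‖piKronecker (Pi.mulSingle i (A i - B i))‖ by
    simpa using h univ
  intro s
  induction s using Finset.induction_on with
  | empty => simp
  | insert j s hj ih =>
    set P := s.piecewise A B
    have hP : ∀ i, P i ∈ unitary (Matrix α α 𝕜) := fun i => by
      by_cases hi : i ∈ s <;> simp [P, hi, hA, hB]
    have hPj : Function.update P j (B j) = P := by
      rw [← Finset.piecewise_eq_of_notMem s A B hj, Function.update_eq_self]
    have hstep : ‖piKronecker (Function.update P j (A j)) - piKronecker P‖ ≤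
        ‖piKronecker (Pi.mulSingle j (A j - B j))‖ := by
      have hdiff : piKronecker (Function.update P j (A j)) - piKronecker P =
          piKronecker (Function.update P j 1) * piKronecker (Pi.mulSingle j (A j - B j)) := by
        rw [← piKronecker_update_eq_mul_mulSingle, ← piKronecker_update_sub, hPj]
      have hU : piKronecker (Function.update P j 1) ∈ unitary (Matrix (ι → α) (ι → α) 𝕜) :=
        piKronecker_mem_unitary fun i => by
          rcases eq_or_ne i j with rfl | hij
          · simp
          · simp [hij, hP]
      rw [hdiff, CStarRing.norm_mem_unitary_mul _ hU]
    rw [Finset.piecewise_insert, sum_insert hj]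
    calc _ ≤ ‖piKronecker (Function.update P j (A j)) - piKronecker P‖ +
          ‖piKronecker P - piKronecker B‖ := norm_sub_le_norm_sub_add_norm_sub _ _ _
      _ ≤ _ := add_le_add hstep ih

end PiKroneckerNorm

end Matrix

namespace Real

theorem abs_sqrt_sub_sqrt_le {c x y : ℝ} (hc : 0 < c) (hx : c ≤ x) (hy : c ≤ y) :
    |√x - √y| ≤ |x - y| / (2 * √c) := by
  have hsum : 2 * √c ≤ √x + √y := by linarith [Real.sqrt_le_sqrt hx, Real.sqrt_le_sqrt hy]
  have hfactor : x - y = (√x - √y) * (√x + √y) := by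
    linear_combination -Real.mul_self_sqrt (hc.le.trans hx) + Real.mul_self_sqrt (hc.le.trans hy)
  rw [le_div_iff₀ (by positivity), hfactor, abs_mul,
    abs_of_pos (a := √x + √y) (by linarith [Real.sqrt_pos.2 hc])]
  gcongr

theorem abs_sqrt_half_sub_sqrt_half_le {c σ x y : ℝ} (hc : 0 < c) (hσ : |σ| = 1)
    (hx : |x| ≤ 1 - c) (hy : |y| ≤ 1 - c) :
    |√((1 + σ * x) / 2) - √((1 + σ * y) / 2)| ≤ |x - y| / √(8 * c) := by
  have hlow : ∀ z, |z| ≤ 1 - c → c / 2 ≤ (1 + σ * z) / 2 := fun z hz => by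
    have := neg_abs_le (σ * z)
    rw [abs_mul, hσ, one_mul] at this
    linarith
  have h8 : √(8 * c) = 2 * (2 * √(c / 2)) := by
    rw [show 8 * c = 4 ^ 2 * (c / 2) by ring, Real.sqrt_mul (by positivity),
      Real.sqrt_sq (by norm_num)]
    ring
  calc _ ≤ |(1 + σ * x) / 2 - (1 + σ * y) / 2| / (2 * √(c / 2)) :=
        abs_sqrt_sub_sqrt_le (by positivity) (hlow x hx) (hlow y hy)
    _ = |x - y| / √(8 * c) := by
      rw [show (1 + σ * x) / 2 - (1 + σ * y) / 2 = σ * (x - y) / 2 by ring, abs_div, abs_mul, hσ,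
        h8]
      norm_num
      ring

theorem sqrt_half_mul_div_sqrt_mul {p q : ℝ} (hp : 0 < p) (hq : 0 < q) :
    √(p / 2) * (q / √(p * q)) = √(q / 2) := by
  have hq' : q = √q * √q := (Real.mul_self_sqrt hq.le).symm
  have := Real.sqrt_pos.2 hp
  have := Real.sqrt_pos.2 hq
  rw [Real.sqrt_div' _ zero_le_two, Real.sqrt_div' _ zero_le_two, Real.sqrt_mul hp.le]
  field_simp
  nth_rewrite 1 [hq']
  ring

end Real

theorem abs_bval (b : Bool) : |bval b| = 1 := by
  cases b <;> simp [bval]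

theorem H1_false_apply (μ : ℝ) (b : Bool) : H1 μ false b = √((1 + μ * bval b) / 2) := by
  simp [H1, D1, phi1]

theorem H1_true_apply {μ : ℝ} (hμ : |μ| < 1) (b : Bool) :
    H1 μ true b = bval b * √((1 - μ * bval b) / 2) := by
  obtain ⟨h₁, h₂⟩ := abs_lt.1 hμ
  cases b
  · have := Real.sqrt_half_mul_div_sqrt_mul (p := 1 - μ) (q := 1 + μ) (by linarith) (by linarith)
    simp only [H1, D1, phi1, bval, if_true, Bool.false_eq_true, if_false]
    rw [show 1 - μ ^ 2 = (1 - μ) * (1 + μ) by ring, show -1 - μ = -(1 + μ) by ring,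
      show 1 + μ * -1 = 1 - μ by ring, show 1 - μ * -1 = 1 + μ by ring, neg_div, mul_neg, this]
    ring
  · have := Real.sqrt_half_mul_div_sqrt_mul (p := 1 + μ) (q := 1 - μ) (by linarith) (by linarith)
    simp only [H1, D1, phi1, bval, if_true, mul_one, one_mul]
    rw [show 1 - μ ^ 2 = (1 + μ) * (1 - μ) by ring, this]

theorem H1_mem_unitary {μ : ℝ} (hμ : |μ| < 1) : H1 μ ∈ unitary (Matrix Bool Bool ℝ) := by
  obtain ⟨h₁, h₂⟩ := abs_lt.1 hμ
  set p := √((1 + μ) / 2)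
  set q := √((1 - μ) / 2)
  have hpq : p ^ 2 + q ^ 2 = 1 := by
    rw [Real.sq_sqrt (by linarith), Real.sq_sqrt (by linarith)]; ring
  have hff : H1 μ false false = q := by simp [H1_false_apply, bval, q, sub_eq_add_neg]
  have hft : H1 μ false true = p := by simp [H1_false_apply, bval, p]
  have htf : H1 μ true false = -p := by simp [H1_true_apply hμ, bval, p]
  have htt : H1 μ true true = q := by simp [H1_true_apply hμ, bval, q]
  refine Matrix.mem_unitaryGroup_iff.2 ?_
  ext v w
  cases v <;> cases w <;>
    simp only [Matrix.mul_apply, Fintype.sum_bool, Matrix.star_apply, star_trivial, hff, hft, htf,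
      htt, Matrix.one_apply_eq, Matrix.one_apply_ne, ne_eq, reduceCtorEq, not_false_eq_true]
  · linear_combination hpq
  · ring
  · ring
  · linear_combination hpq

theorem abs_H1_sub_H1_le {c x y : ℝ} (hc : 0 < c) (hx : |x| ≤ 1 - c) (hy : |y| ≤ 1 - c)
    (v b : Bool) : |H1 x v b - H1 y v b| ≤ |x - y| / √(8 * c) := by
  cases v
  · simp only [H1_false_apply, mul_comm _ (bval b)]
    exact Real.abs_sqrt_half_sub_sqrt_half_le hc (abs_bval b) hx hy
  · have hlt : ∀ z, |z| ≤ 1 - c → |z| < 1 := fun z hz => by linarith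
    have hneg : ∀ z, 1 - z * bval b = 1 + -bval b * z := fun z => by ring
    rw [H1_true_apply (hlt x hx), H1_true_apply (hlt y hy), ← mul_sub, abs_mul, abs_bval, one_mul,
      hneg, hneg]
    exact Real.abs_sqrt_half_sub_sqrt_half_le hc (by rw [abs_neg, abs_bval]) hx hy

theorem one_div_sqrt_le_perturbation_constant {c : ℝ} (hc : 0 < c) (hc1 : c ≤ 1) :
    1 / √(8 * c) ≤ ((2 - c) * (1 / √(8 * c) + 1 / (2 * c)) + 1) / c ^ 2 := by
  have ha : 0 ≤ 1 / √(8 * c) := by positivity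
  have hb : 0 < 1 / (2 * c) := by positivity
  rw [le_div_iff₀ (by positivity)]
  nlinarith [mul_le_mul_of_nonneg_left (pow_le_one₀ hc.le hc1 : c ^ 2 ≤ 1) ha]

theorem Hn_eq_piKronecker {n : ℕ} (μ : Fin n → ℝ) : Hn μ = piKronecker fun i => H1 (μ i) := rfl

theorem n_qubit_QFT_perturbation_general {n : ℕ} (c ε : ℝ) (hc : 0 < c) (hc1 : c ≤ 1)
    (μ μt : Fin n → ℝ) (hμ : ∀ i, |μ i| ≤ 1 - c) (hμt : ∀ i, |μt i| ≤ 1 - c)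
    (hε : ∀ i, |μ i - μt i| ≤ ε) :
    ‖Matrix.toEuclideanCLM (𝕜 := ℝ) (Hn μ) - Matrix.toEuclideanCLM (𝕜 := ℝ) (Hn μt)‖ ≤
      2 * n * (((2 - c) * (1 / Real.sqrt (8 * c) + 1 / (2 * c)) + 1) / c ^ 2) * ε := by
  set t := ((2 - c) * (1 / √(8 * c) + 1 / (2 * c)) + 1) / c ^ 2
  have ht : 1 / √(8 * c) ≤ t := one_div_sqrt_le_perturbation_constant hc hc1
  have hunitary : ∀ ν : Fin n → ℝ, (∀ i, |ν i| ≤ 1 - c) → ∀ i, H1 (ν i) ∈ unitary _ :=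
    fun ν hν i => H1_mem_unitary (by linarith [hν i])
  have hentry : ∀ i u v, ‖(H1 (μ i) - H1 (μt i)) u v‖ ≤ t * ε := fun i u v =>
    calc |H1 (μ i) u v - H1 (μt i) u v| ≤ |μ i - μt i| / √(8 * c) :=
          abs_H1_sub_H1_le hc (hμ i) (hμt i) u v
      _ ≤ ε * (1 / √(8 * c)) := by rw [div_eq_mul_one_div]; gcongr; exact hε i
      _ ≤ t * ε := by rw [mul_comm t]; gcongr; exact (abs_nonneg _).trans (hε i)
  rw [← map_sub, ← cstar_norm_def, Hn_eq_piKronecker, Hn_eq_piKronecker]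
  calc _ ≤ ∑ i, ‖piKronecker (Pi.mulSingle i (H1 (μ i) - H1 (μt i)))‖ :=
        norm_piKronecker_sub_le (hunitary μ hμ) (hunitary μt hμt)
    _ ≤ ∑ _i : Fin n, 2 * (t * ε) := sum_le_sum fun i _ => by
        have hε_nonneg : 0 ≤ ε := (abs_nonneg _).trans (hε i)
        have hκ : 0 ≤ t * ε := mul_nonneg ((by positivity : 0 ≤ 1 / √(8 * c)).trans ht) hε_nonneg
        simpa using norm_piKronecker_mulSingle_le hκ (hentry i) i
    _ = 2 * n * t * ε := by rw [sum_const, card_univ, Fintype.card_fin, nsmul_eq_mul]; ring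

/-- Operator-norm perturbation of the n-qubit μ-biased QFT: for `c ∈ (0,1]` and
`μ, μ̃ ∈ [-1+c, 1-c]ⁿ` with `‖μ − μ̃‖_∞ ≤ ε`, we have `‖H_μ^{⊗n} − H_μ̃^{⊗n}‖ ≤ 2ntε`
in operator norm, where `t = ((2−c)(1/√(8c) + 1/(2c)) + 1)/c²`. -/
theorem n_qubit_QFT_perturbation {n : ℕ} (c ε : ℝ) (hc : 0 < c) (hc1 : c ≤ 1)
    (μ μt : Fin n → ℝ) (hμ : ∀ i, |μ i| ≤ 1 - c) (hμt : ∀ i, |μt i| ≤ 1 - c)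
    (hε₀ : 0 ≤ ε) (hε : ∀ i, |μ i - μt i| ≤ ε) :
    ‖Matrix.toEuclideanCLM (𝕜 := ℝ) (Hn μ) - Matrix.toEuclideanCLM (𝕜 := ℝ) (Hn μt)‖ ≤
      2 * n * (((2 - c) * (1 / Real.sqrt (8 * c) + 1 / (2 * c)) + 1) / c ^ 2) * ε :=
  n_qubit_QFT_perturbation_general c ε hc hc1 μ μt hμ hμt hε
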